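/- Weak chain property: let f_0, ..., f_n be strictly positive random variables with f_0 = f_n, and suppose E[f_{i-1}/f_i] ≤ 1 for each i ∈ {1,...,n}. Then f_i = f_0 almost surely for all i ∈ {1,...,n}. -/

import Mathlib

open MeasureTheory Finset
open scoped ENNReal

/-! The ratios `g j = f j / f (j + 1)` are positive and telescope to `∏ g j = f 0 / f n = 1`.
Since `x - 1 - log x ≥ 0` with equality only at `x = 1`, summing over `j` gives `∑ g j ≥ n`
pointwise, while `E[∑ g j] ≤ n`. Hence `∑ g j = n` a.s., so every term `g j - 1 - log (g j)`
vanishes and `g j = 1` a.s. -/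

/-- Division of nonnegative reals with the conventions `x / 0 = ∞` for `x > 0`
and `0 / 0 = 1`, valued in `ℝ≥0∞`. -/
noncomputable def qdiv (x y : ℝ) : ℝ≥0∞ :=
  if x = 0 ∧ y = 0 then 1 else if y = 0 then ⊤ else ENNReal.ofReal (x / y)

theorem qdiv_of_ne_zero (x : ℝ) {y : ℝ} (hy : y ≠ 0) : qdiv x y = ENNReal.ofReal (x / y) := by
  simp [qdiv, hy]

theorem Finset.prod_range_div_of_ne_zero {G : Type*} [CommGroupWithZero G] {a : ℕ → G} {n : ℕ}
    (ha : ∀ i ≤ n, a i ≠ 0) : ∏ i ∈ range n, a i / a (i + 1) = a 0 / a n := by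
  induction n with
  | zero => simp [div_self (ha 0 le_rfl)]
  | succ n ih =>
    rw [prod_range_succ, ih fun i hi => ha i (by omega),
      div_mul_div_cancel₀ (ha n (by omega))]

theorem Real.sum_sub_one_sub_log_eq {ι : Type*} {s : Finset ι} {x : ι → ℝ}
    (hx : ∀ j ∈ s, 0 < x j) (hprod : ∏ j ∈ s, x j = 1) :
    ∑ j ∈ s, (x j - 1 - Real.log (x j)) = ∑ j ∈ s, x j - #s := by
  have hlog : ∑ j ∈ s, Real.log (x j) = 0 := by
    rw [← Real.log_prod fun j hj => (hx j hj).ne', hprod, Real.log_one]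
  simp [sum_sub_distrib, hlog]

theorem Real.sub_one_sub_log_nonneg {x : ℝ} (hx : 0 < x) : 0 ≤ x - 1 - Real.log x := by
  linarith [Real.log_le_sub_one_of_pos hx]

theorem Real.card_le_sum_of_prod_eq_one {ι : Type*} {s : Finset ι} {x : ι → ℝ}
    (hx : ∀ j ∈ s, 0 < x j) (hprod : ∏ j ∈ s, x j = 1) : (#s : ℝ) ≤ ∑ j ∈ s, x j := by
  have := sum_nonneg fun j hj => Real.sub_one_sub_log_nonneg (hx j hj)
  linarith [Real.sum_sub_one_sub_log_eq hx hprod]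

theorem Real.eq_one_of_prod_eq_one_of_sum_le_card {ι : Type*} {s : Finset ι} {x : ι → ℝ}
    (hx : ∀ j ∈ s, 0 < x j) (hprod : ∏ j ∈ s, x j = 1) (hsum : ∑ j ∈ s, x j ≤ #s) :
    ∀ j ∈ s, x j = 1 := by
  have hterm : ∀ j ∈ s, 0 ≤ x j - 1 - Real.log (x j) := fun j hj =>
    Real.sub_one_sub_log_nonneg (hx j hj)
  have hzero : ∑ j ∈ s, (x j - 1 - Real.log (x j)) = 0 :=
    le_antisymm (by linarith [Real.sum_sub_one_sub_log_eq hx hprod]) (sum_nonneg hterm)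
  intro j hj
  by_contra hne
  have := Real.log_lt_sub_one_of_pos (hx j hj) hne
  linarith [(sum_eq_zero_iff_of_nonneg hterm).1 hzero j hj]

section

variable {Ω : Type*} [MeasurableSpace Ω] {μ : Measure Ω} [IsProbabilityMeasure μ]

theorem ae_eq_const_of_ae_le_of_lintegral_le {h : Ω → ℝ} {c : ℝ} (hc : 0 ≤ c)
    (hmeas : AEMeasurable h μ) (hle : ∀ᵐ ω ∂μ, c ≤ h ω)
    (hint : ∫⁻ ω, ENNReal.ofReal (h ω) ∂μ ≤ ENNReal.ofReal c) : h =ᵐ[μ] fun _ => c := by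
  have hle' : (fun _ => ENNReal.ofReal c) ≤ᵐ[μ] fun ω => ENNReal.ofReal (h ω) :=
    hle.mono fun ω hω => ENNReal.ofReal_le_ofReal hω
  have heq :=
    ae_eq_of_ae_le_of_lintegral_le hle' (by simp) hmeas.ennreal_ofReal (by simpa using hint)
  filter_upwards [heq, hle] with ω hω hcω
  exact ((ENNReal.ofReal_eq_ofReal_iff hc (hc.trans hcω)).1 hω).symm

theorem ae_eq_one_of_prod_eq_one_of_lintegral_le_one {ι : Type*} {s : Finset ι} {g : ι → Ω → ℝ}
    (hmeas : ∀ j ∈ s, AEMeasurable (g j) μ) (hpos : ∀ j ∈ s, ∀ᵐ ω ∂μ, 0 < g j ω)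
    (hprod : ∀ᵐ ω ∂μ, ∏ j ∈ s, g j ω = 1)
    (hint : ∀ j ∈ s, ∫⁻ ω, ENNReal.ofReal (g j ω) ∂μ ≤ 1) :
    ∀ j ∈ s, g j =ᵐ[μ] 1 := by
  have hpos' : ∀ᵐ ω ∂μ, ∀ j ∈ s, 0 < g j ω := (Filter.eventually_all_finset s).2 hpos
  have hsum_int : ∫⁻ ω, ENNReal.ofReal (∑ j ∈ s, g j ω) ∂μ ≤ ENNReal.ofReal #s := by
    calc ∫⁻ ω, ENNReal.ofReal (∑ j ∈ s, g j ω) ∂μ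
        = ∫⁻ ω, ∑ j ∈ s, ENNReal.ofReal (g j ω) ∂μ := lintegral_congr_ae <| hpos'.mono
          fun ω hω => ENNReal.ofReal_sum_of_nonneg fun j hj => (hω j hj).le
      _ = ∑ j ∈ s, ∫⁻ ω, ENNReal.ofReal (g j ω) ∂μ :=
          lintegral_finsetSum' s fun j hj => (hmeas j hj).ennreal_ofReal
      _ ≤ ∑ j ∈ s, 1 := sum_le_sum hint
      _ = ENNReal.ofReal #s := by simp
  have hsum : ∀ᵐ ω ∂μ, ∑ j ∈ s, g j ω = #s :=
    ae_eq_const_of_ae_le_of_lintegral_le (Nat.cast_nonneg _)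
      (Finset.aemeasurable_fun_sum s hmeas)
      (by filter_upwards [hpos', hprod] with ω hω hωprod
          exact Real.card_le_sum_of_prod_eq_one hω hωprod) hsum_int
  have hone : ∀ᵐ ω ∂μ, ∀ j ∈ s, g j ω = 1 := by
    filter_upwards [hpos', hprod, hsum] with ω hω hωprod hωsum
    exact Real.eq_one_of_prod_eq_one_of_sum_le_card hω hωprod hωsum.le
  exact (Filter.eventually_all_finset s).1 hone

end

/-- Weak chain property: if `f 0, …, f n` are strictly positive random variables with
`f 0 = f n` a.s. and `E[f (i-1) / f i] ≤ 1` for each `i ∈ {1, …, n}`, then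
`f i = f 0` a.s. for all `i ≤ n`. -/
theorem stmt7 {Ω : Type*} [MeasurableSpace Ω] (P : Measure Ω) [IsProbabilityMeasure P]
    (n : ℕ) (f : ℕ → Ω → ℝ)
    (hmeas : ∀ i ≤ n, Measurable (f i))
    (hpos : ∀ i ≤ n, ∀ᵐ ω ∂P, 0 < f i ω)
    (hcycle : f 0 =ᵐ[P] f n)
    (hrel : ∀ i, 1 ≤ i → i ≤ n → ∫⁻ ω, qdiv (f (i - 1) ω) (f i ω) ∂P ≤ 1) :
    ∀ i ≤ n, f i =ᵐ[P] f 0 := by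
  have hpos' : ∀ᵐ ω ∂P, ∀ i ≤ n, 0 < f i ω :=
    (Filter.eventually_all_finite (Set.finite_Iic n)).2 hpos
  have hratio : ∀ j ∈ range n, (fun ω => f j ω / f (j + 1) ω) =ᵐ[P] 1 := by
    refine ae_eq_one_of_prod_eq_one_of_lintegral_le_one
      (fun j hj => ((hmeas j (mem_range.1 hj).le).div
        (hmeas (j + 1) (mem_range.1 hj))).aemeasurable)
      (fun j hj => ?_) ?_ (fun j hj => ?_)
    · filter_upwards [hpos'] with ω hω
      exact div_pos (hω j (mem_range.1 hj).le) (hω (j + 1) (mem_range.1 hj))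
    · filter_upwards [hpos', hcycle] with ω hω hωcycle
      rw [prod_range_div_of_ne_zero fun i hi => (hω i hi).ne', hωcycle, div_self (hω n le_rfl).ne']
    · refine le_of_eq_of_le (lintegral_congr_ae ?_) (hrel (j + 1) (by omega) (mem_range.1 hj))
      filter_upwards [hpos'] with ω hω
      rw [Nat.add_sub_cancel, qdiv_of_ne_zero _ (hω (j + 1) (mem_range.1 hj)).ne']
  intro i hi
  induction i with
  | zero => rfl
  | succ i ih =>
    refine Filter.EventuallyEq.trans ?_ (ih (by omega))
    filter_upwards [hratio i (by simpa using hi), hpos'] with ω hω hωpos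
    exact ((div_eq_one_iff_eq (hωpos (i + 1) hi).ne').1 hω).symm
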